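/- arXiv:2503.09545 — 6 statements merged into one kernel-verified Lean document; each statement's English description precedes it below -/
import Mathlib

section
/- Theorem 1 (completeness of the commit compilation): if the STRIPS planning task P = ⟨F, A, I, G⟩ has a plan, then the commit planning task P_c = ⟨F ∪ F', A_c, I, G_c⟩ also has a plan. -/
/-- A STRIPS action: positive/negative preconditions, add/delete effects, nonnegative cost. -/
structure StripsAction (α : Type*) where
  prePos : Set α
  preNeg : Set α
  add : Set α
  del : Set α
  cost : NNReal

variable {α : Type*}

/-- An action is applicable in state `s` iff `pre⁺ ⊆ s` and `pre⁻ ∩ s = ∅`. -/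
def StripsAction.Applicable (a : StripsAction α) (s : Set α) : Prop :=
  a.prePos ⊆ s ∧ a.preNeg ∩ s = ∅

/-- Result of applying an action: `γ(s,a) = (s \ del(a)) ∪ add(a)`. -/
def StripsAction.apply (a : StripsAction α) (s : Set α) : Set α :=
  (s \ a.del) ∪ a.add

/-- `Γ(s, π)`: the state resulting from applying the sequence `π` in `s`. -/
def seqResult (s : Set α) : List (StripsAction α) → Set α
  | [] => s
  | a :: π => seqResult (a.apply s) π

/-- A sequence of actions is applicable in `s` if each action is applicable in the
state resulting from the previous ones. -/
def SeqApplicable (s : Set α) : List (StripsAction α) → Prop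
  | [] => True
  | a :: π => a.Applicable s ∧ SeqApplicable (a.apply s) π

/-- Cost of a plan: sum of the costs of its actions. -/
def planCost (π : List (StripsAction α)) : NNReal :=
  (π.map StripsAction.cost).sum

/-- A STRIPS planning task `P = ⟨F, A, I, G⟩`. -/
structure StripsTask (α : Type*) where
  F : Set α
  A : Set (StripsAction α)
  I : Set α
  G : Set α

/-- Well-formedness of a STRIPS planning task: `F` and `A` finite, `I ⊆ F`, `G ⊆ F`,
all action components within `F`, and `add(a) ∩ del(a) = ∅`. -/
def StripsTask.WellFormed (T : StripsTask α) : Prop :=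
  T.F.Finite ∧ T.A.Finite ∧ T.I ⊆ T.F ∧ T.G ⊆ T.F ∧
    ∀ a ∈ T.A, a.prePos ⊆ T.F ∧ a.preNeg ⊆ T.F ∧ a.add ⊆ T.F ∧ a.del ⊆ T.F ∧
      a.add ∩ a.del = ∅

/-- A plan for a task: a sequence of actions of the task, applicable in `I`,
whose result satisfies `G`. -/
def StripsTask.IsPlan (T : StripsTask α) (π : List (StripsAction α)) : Prop :=
  (∀ a ∈ π, a ∈ T.A) ∧ SeqApplicable T.I π ∧ T.G ⊆ seqResult T.I π

/-- A task is solvable if it has a plan. -/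
def StripsTask.Solvable (T : StripsTask α) : Prop := ∃ π, T.IsPlan π

/-- An optimal plan: a plan of minimal cost among all plans. -/
def StripsTask.OptimalPlan (T : StripsTask α) (π : List (StripsAction α)) : Prop :=
  T.IsPlan π ∧ ∀ π₂, T.IsPlan π₂ → planCost π ≤ planCost π₂

/-- Pending goals: `Ḡ = {g ∈ G \ I | ∃ a ∈ A, g ∈ add(a)}`. -/
def pending (T : StripsTask α) : Set α :=
  {g | g ∈ T.G \ T.I ∧ ∃ a ∈ T.A, g ∈ a.add}

/-- The map `g ↦ g-commit` introduces fresh fluents: it is injective on the pending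
goals and its values on them avoid `F`. -/
def FreshCommit (T : StripsTask α) (commit : α → α) : Prop :=
  Set.InjOn commit (pending T) ∧ ∀ g ∈ pending T, commit g ∉ T.F

/-- Commit version of an action `a ∈ A^G` for a subset `i ⊆ add(a) ∩ Ḡ`. -/
def commitAction (commit : α → α) (a : StripsAction α) (i : Set α) : StripsAction α :=
  ⟨a.prePos, a.preNeg ∪ commit '' i, a.add ∪ commit '' i, a.del, a.cost⟩

/-- Force-commit version of an action `a ∈ A^¬G`. -/
def forceCommitAction (commit : α → α) (Gbar : Set α) (a : StripsAction α) : StripsAction α :=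
  ⟨a.prePos, a.preNeg ∪ commit '' (a.del ∩ Gbar), a.add, a.del, a.cost⟩

/-- Simultaneous version of an action `a ∈ A^G*` for a subset `j ⊆ add(a) ∩ Ḡ`. -/
def simAction (commit : α → α) (Gbar : Set α) (a : StripsAction α) (j : Set α) : StripsAction α :=
  ⟨a.prePos, a.preNeg ∪ commit '' j ∪ commit '' (a.del ∩ Gbar),
    a.add ∪ commit '' j, a.del, a.cost⟩

/-- `CompiledFrom T commit a' a` holds iff `a'` is one of the actions of the commit
task built from the original action `a ∈ A`, i.e. `ρ(a') = a`. -/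
def CompiledFrom (T : StripsTask α) (commit : α → α) (a' a : StripsAction α) : Prop :=
  a ∈ T.A ∧
    ((a.add ∩ pending T ≠ ∅ ∧ a.del ∩ pending T = ∅ ∧
        ∃ i ⊆ a.add ∩ pending T, a' = commitAction commit a i) ∨
     (a.add ∩ pending T = ∅ ∧ a.del ∩ pending T ≠ ∅ ∧
        a' = forceCommitAction commit (pending T) a) ∨
     (a.add ∩ pending T ≠ ∅ ∧ a.del ∩ pending T ≠ ∅ ∧
        ∃ j ⊆ a.add ∩ pending T, a' = simAction commit (pending T) a j) ∨
     (a.add ∩ pending T = ∅ ∧ a.del ∩ pending T = ∅ ∧ a' = a))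

/-- The commit planning task `P_c = ⟨F ∪ F', A_c, I, G_c⟩`. -/
def commitTask (T : StripsTask α) (commit : α → α) : StripsTask α :=
  ⟨T.F ∪ commit '' pending T,
   {a' | ∃ a, CompiledFrom T commit a' a},
   T.I,
   (T.G \ pending T) ∪ commit '' pending T⟩

/-!
Commit every pending goal at its *last achiever* in a plan `π` of `P`: the occurrence of an action
of `π` adding the goal after which no action adds it again. A goal committed at step `k` lies in
every later state of `π` (it is a goal of the final state and nothing re-adds it), so no later
action deletes it and the negative `g-commit` preconditions of the later compiled actions never
fire. Since the commit fluents are fresh, the compiled plan otherwise runs exactly like `π`, and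
it ends in the final state of `π` together with every commit fluent.
-/

lemma exists_mem_add_of_mem_seqResult {g : α} :
    ∀ {s : Set α} {π : List (StripsAction α)}, g ∉ s → g ∈ seqResult s π → ∃ b ∈ π, g ∈ b.add
  | _, [], hs, hg => absurd hg hs
  | s, b :: π, hs, hg => by
    by_cases hb : g ∈ b.add
    · exact ⟨b, List.mem_cons_self, hb⟩
    · have hbs : g ∉ b.apply s := fun h => h.elim (fun h => hs h.1) hb
      obtain ⟨c, hc, hgc⟩ := exists_mem_add_of_mem_seqResult hbs hg
      exact ⟨c, List.mem_cons_of_mem _ hc, hgc⟩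

lemma StripsAction.apply_subset {a : StripsAction α} {s F : Set α} (hs : s ⊆ F)
    (ha : a.add ⊆ F) : a.apply s ⊆ F :=
  Set.union_subset (Set.sdiff_subset.trans hs) ha

/-- The goals already committed when `π` is what remains of the plan. -/
def committedGoals (T : StripsTask α) (π : List (StripsAction α)) : Set α :=
  {g | g ∈ pending T ∧ ∀ b ∈ π, g ∉ b.add}

/-- All four families of `A_c` have this shape: the extra preconditions vanish when `i` or
`del(a) ∩ Gbar` is empty. -/
def compiledAction (commit : α → α) (Gbar : Set α) (a : StripsAction α) (i : Set α) :
    StripsAction α :=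
  ⟨a.prePos, a.preNeg ∪ commit '' i ∪ commit '' (a.del ∩ Gbar), a.add ∪ commit '' i, a.del,
    a.cost⟩

/-- Each action of the plan commits the goals it achieves for the last time. -/
def compilePlan (T : StripsTask α) (commit : α → α) : List (StripsAction α) → List (StripsAction α)
  | [] => []
  | a :: π =>
    compiledAction commit (pending T) a (a.add ∩ committedGoals T π) :: compilePlan T commit π

section

variable {T : StripsTask α} {commit : α → α}

lemma committedGoals_nil : committedGoals T [] = pending T := by
  ext g
  simp [committedGoals]

lemma committedGoals_subset_pending (π : List (StripsAction α)) :
    committedGoals T π ⊆ pending T :=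
  fun _ hg => hg.1

lemma committedGoals_eq_union_cons (a : StripsAction α) (π : List (StripsAction α)) :
    committedGoals T π = committedGoals T (a :: π) ∪ (a.add ∩ committedGoals T π) := by
  ext g
  by_cases hga : g ∈ a.add <;> simp [committedGoals, hga]

lemma disjoint_add_inter_committedGoals_cons (a : StripsAction α) (π : List (StripsAction α)) :
    Disjoint (a.add ∩ committedGoals T π) (committedGoals T (a :: π)) :=
  Set.disjoint_left.mpr fun _ hi hc => hc.2 a List.mem_cons_self hi.1

lemma committedGoals_eq_empty {π : List (StripsAction α)} (hG : T.G ⊆ seqResult T.I π) :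
    committedGoals T π = ∅ :=
  Set.eq_empty_of_forall_notMem fun _ ⟨hp, hno⟩ =>
    let ⟨b, hb, hgb⟩ := exists_mem_add_of_mem_seqResult hp.1.2 (hG hp.1.1)
    hno b hb hgb

/-- A committed goal is never deleted: it could not be re-added, yet it holds at the end. -/
lemma disjoint_del_committedGoals_cons {s : Set α} {a : StripsAction α}
    {π : List (StripsAction α)} (hG : T.G ⊆ seqResult s (a :: π)) :
    Disjoint a.del (committedGoals T (a :: π)) := by
  refine Set.disjoint_left.mpr fun g hdel hc => ?_
  have hgs : g ∉ a.apply s := fun h => h.elim (fun h => h.2 hdel) (hc.2 a List.mem_cons_self)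
  obtain ⟨b, hb, hgb⟩ := exists_mem_add_of_mem_seqResult hgs (hG hc.1.1.1)
  exact hc.2 b (List.mem_cons_of_mem _ hb) hgb

lemma compiledFrom_compiledAction {a : StripsAction α} {i : Set α} (ha : a ∈ T.A)
    (hi : i ⊆ a.add ∩ pending T) :
    CompiledFrom T commit (compiledAction commit (pending T) a i) a := by
  refine ⟨ha, ?_⟩
  by_cases hadd : a.add ∩ pending T = ∅ <;> by_cases hdel : a.del ∩ pending T = ∅
  · have hi : i = ∅ := Set.subset_empty_iff.mp (hadd ▸ hi)
    exact Or.inr <| Or.inr <| Or.inr ⟨hadd, hdel, by simp [compiledAction, hi, hdel]⟩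
  · have hi : i = ∅ := Set.subset_empty_iff.mp (hadd ▸ hi)
    exact Or.inr <| Or.inl ⟨hadd, hdel, by simp [compiledAction, forceCommitAction, hi]⟩
  · exact Or.inl ⟨hadd, hdel, i, hi, by simp [compiledAction, commitAction, hdel]⟩
  · exact Or.inr <| Or.inr <| Or.inl ⟨hadd, hdel, i, hi, rfl⟩

lemma compilePlan_mem_commitTask {π : List (StripsAction α)} (hπ : ∀ a ∈ π, a ∈ T.A) :
    ∀ a' ∈ compilePlan T commit π, a' ∈ (commitTask T commit).A := by
  induction π with
  | nil => simp [compilePlan]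
  | cons a π ih =>
    simp only [compilePlan, List.mem_cons, forall_eq_or_imp]
    exact ⟨⟨a, compiledFrom_compiledAction (hπ a List.mem_cons_self)
        (Set.inter_subset_inter_right _ (committedGoals_subset_pending π))⟩,
      ih fun b hb => hπ b (List.mem_cons_of_mem _ hb)⟩

lemma FreshCommit.disjoint_image_left {C s : Set α} (hfresh : FreshCommit T commit)
    (hC : C ⊆ pending T) (hs : s ⊆ T.F) : Disjoint (commit '' C) s :=
  Set.disjoint_left.mpr fun _ ⟨g, hg, hgx⟩ hx => hfresh.2 g (hC hg) (hgx ▸ hs hx)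

lemma FreshCommit.disjoint_image_image {C D : Set α} (hfresh : FreshCommit T commit)
    (hC : C ⊆ pending T) (hD : D ⊆ pending T) (hCD : Disjoint C D) :
    Disjoint (commit '' C) (commit '' D) := by
  rw [Set.disjoint_iff_inter_eq_empty, ← hfresh.1.image_inter hC hD,
    Set.disjoint_iff_inter_eq_empty.mp hCD, Set.image_empty]

lemma compiledAction_applicable {a : StripsAction α} {s C i : Set α}
    (hfresh : FreshCommit T commit) (hpre : a.preNeg ⊆ T.F) (hs : s ⊆ T.F) (hC : C ⊆ pending T)
    (hi : i ⊆ pending T) (hiC : Disjoint i C) (hdelC : Disjoint a.del C)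
    (ha : a.Applicable s) :
    (compiledAction commit (pending T) a i).Applicable (s ∪ commit '' C) := by
  refine ⟨ha.1.trans Set.subset_union_left, Set.disjoint_iff_inter_eq_empty.mp ?_⟩
  have hpreC : Disjoint a.preNeg (commit '' C) :=
    (hfresh.disjoint_image_left hC hpre).symm
  have hdelC' : Disjoint (a.del ∩ pending T) C := hdelC.mono_left Set.inter_subset_left
  refine Set.disjoint_union_left.mpr ⟨Set.disjoint_union_left.mpr ⟨?_, ?_⟩, ?_⟩ <;>
    refine Set.disjoint_union_right.mpr ⟨?_, ?_⟩
  exacts [Set.disjoint_iff_inter_eq_empty.mpr ha.2, hpreC, hfresh.disjoint_image_left hi hs,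
    hfresh.disjoint_image_image hi hC hiC, hfresh.disjoint_image_left Set.inter_subset_right hs,
    hfresh.disjoint_image_image Set.inter_subset_right hC hdelC']

lemma compiledAction_apply {a : StripsAction α} {s C : Set α} (i : Set α)
    (hfresh : FreshCommit T commit) (hdel : a.del ⊆ T.F) (hC : C ⊆ pending T) :
    (compiledAction commit (pending T) a i).apply (s ∪ commit '' C) =
      a.apply s ∪ commit '' (C ∪ i) := by
  have hCdel : commit '' C \ a.del = commit '' C :=
    (hfresh.disjoint_image_left hC hdel).sdiff_eq_left
  simp only [compiledAction, StripsAction.apply, Set.union_sdiff_distrib, hCdel, Set.image_union]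
  ac_rfl

lemma seqResult_compilePlan (hwf : T.WellFormed) (hfresh : FreshCommit T commit) :
    ∀ {π : List (StripsAction α)} {s : Set α}, (∀ a ∈ π, a ∈ T.A) → s ⊆ T.F →
      T.G ⊆ seqResult s π →
      seqResult (s ∪ commit '' committedGoals T π) (compilePlan T commit π) =
        seqResult s π ∪ commit '' pending T
  | [], s, _, _, _ => by simp [compilePlan, seqResult, committedGoals_nil]
  | a :: π, s, hπ, hs, hG => by
    obtain ⟨-, -, hadd, hdel, -⟩ := hwf.2.2.2.2 a (hπ a List.mem_cons_self)
    rw [compilePlan, seqResult, compiledAction_apply _ hfresh hdel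
      (committedGoals_subset_pending _), ← committedGoals_eq_union_cons]
    exact seqResult_compilePlan hwf hfresh (fun b hb => hπ b (List.mem_cons_of_mem _ hb))
      (a.apply_subset hs hadd) hG

lemma seqApplicable_compilePlan (hwf : T.WellFormed) (hfresh : FreshCommit T commit) :
    ∀ {π : List (StripsAction α)} {s : Set α}, (∀ a ∈ π, a ∈ T.A) → s ⊆ T.F →
      SeqApplicable s π → T.G ⊆ seqResult s π →
      SeqApplicable (s ∪ commit '' committedGoals T π) (compilePlan T commit π)
  | [], _, _, _, _, _ => trivial
  | a :: π, s, hπ, hs, happ, hG => by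
    obtain ⟨-, hpre, hadd, hdel, -⟩ := hwf.2.2.2.2 a (hπ a List.mem_cons_self)
    have hC := committedGoals_subset_pending (T := T) (a :: π)
    refine ⟨compiledAction_applicable hfresh hpre hs hC
      (Set.inter_subset_right.trans (committedGoals_subset_pending π))
      (disjoint_add_inter_committedGoals_cons a π) (disjoint_del_committedGoals_cons hG) happ.1, ?_⟩
    rw [compiledAction_apply _ hfresh hdel hC, ← committedGoals_eq_union_cons]
    exact seqApplicable_compilePlan hwf hfresh (fun b hb => hπ b (List.mem_cons_of_mem _ hb))
      (a.apply_subset hs hadd) happ.2 hG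

end

/-- Theorem 1 (completeness): if `P` is solvable, then `P_c` is solvable. -/
theorem commit_compilation_complete {α : Type*} (T : StripsTask α) (commit : α → α)
    (hwf : T.WellFormed) (hfresh : FreshCommit T commit)
    (h : T.Solvable) : (commitTask T commit).Solvable := by
  obtain ⟨π, hπ, happ, hG⟩ := h
  have hI : T.I ⊆ T.F := hwf.2.2.1
  have hstart : T.I ∪ commit '' committedGoals T π = T.I := by
    rw [committedGoals_eq_empty hG, Set.image_empty, Set.union_empty]
  refine ⟨compilePlan T commit π, compilePlan_mem_commitTask hπ, ?_, ?_⟩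
  · show SeqApplicable T.I _
    simpa only [hstart] using seqApplicable_compilePlan hwf hfresh hπ hI happ hG
  · show (T.G \ pending T) ∪ commit '' pending T ⊆ seqResult T.I (compilePlan T commit π)
    rw [← hstart, seqResult_compilePlan hwf hfresh hπ hI hG]
    exact Set.union_subset_union (Set.sdiff_subset.trans hG) subset_rfl
end

section
/- Theorem 2 (soundness of the commit compilation): if π' = (a'₁,…,a'ₙ) is a plan of the commit task P_c, then the sequence ρ(π') = (ρ(a'₁),…,ρ(a'ₙ)), obtained by replacing each action of π' by its original counterpart, is a plan of the original STRIPS planning task P, and c(ρ(π')) = c(π'). -/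
variable {α : Type*}

/-!
A plan of the commit task is simulated step by step in the original task. Every reachable
state of the commit task is an original state `s ⊆ F` plus a set of commit fluents, and a
commit fluent `g-commit` is only ever present together with `g` itself: it is added only by
actions that also add `g`, and the compiled actions that delete `g` are forbidden once it is
present. Since the commit fluents lie outside `F`, the compiled actions act on `s` exactly as
their originals do; at the end each `g-commit` of the commit goal certifies the pending goal `g`.
-/

structure CommitRefines (commit : α → α) (Gbar : Set α) (a' a : StripsAction α) : Prop where
  prePos_eq : a'.prePos = a.prePos
  preNeg_subset : a.preNeg ⊆ a'.preNeg
  commit_del_subset : commit '' (a.del ∩ Gbar) ⊆ a'.preNeg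
  del_eq : a'.del = a.del
  cost_eq : a'.cost = a.cost
  exists_add_eq : ∃ i ⊆ a.add ∩ Gbar, a'.add = a.add ∪ commit '' i

theorem CompiledFrom.commitRefines {T : StripsTask α} {commit : α → α} {a' a : StripsAction α}
    (h : CompiledFrom T commit a' a) : CommitRefines commit (pending T) a' a := by
  obtain ⟨-, hcase⟩ := h
  rcases hcase with ⟨-, hdel, i, hi, rfl⟩ | ⟨-, -, rfl⟩ | ⟨-, -, j, hj, rfl⟩ | ⟨-, hdel, rfl⟩
  · refine ⟨rfl, Set.subset_union_left, ?_, rfl, rfl, i, hi, rfl⟩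
    simp [hdel]
  · exact ⟨rfl, Set.subset_union_left, Set.subset_union_right, rfl, rfl,
      ∅, Set.empty_subset _, by simp [forceCommitAction]⟩
  · exact ⟨rfl, Set.subset_union_left.trans Set.subset_union_left, Set.subset_union_right,
      rfl, rfl, j, hj, rfl⟩
  · refine ⟨rfl, subset_rfl, ?_, rfl, rfl, ∅, Set.empty_subset _, by simp⟩
    simp [hdel]

structure IsCommitExtension (F Gbar : Set α) (commit : α → α) (s' s : Set α) : Prop where
  subset : s ⊆ F
  exists_eq_union : ∃ C ⊆ commit '' Gbar, s' = s ∪ C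
  mem_of_commit_mem : ∀ g ∈ Gbar, commit g ∈ s' → g ∈ s

namespace IsCommitExtension

variable {F Gbar s s' : Set α} {commit : α → α} {a a' : StripsAction α}

theorem self (hfresh : Disjoint F (commit '' Gbar)) (hs : s ⊆ F) :
    IsCommitExtension F Gbar commit s s :=
  ⟨hs, ⟨∅, Set.empty_subset _, (Set.union_empty s).symm⟩,
    fun g hg hgs => (hfresh.notMem_of_mem_left (hs hgs) ⟨g, hg, rfl⟩).elim⟩

theorem mem_of_mem_of_mem (hfresh : Disjoint F (commit '' Gbar))
    (h : IsCommitExtension F Gbar commit s' s) {x : α} (hx : x ∈ s') (hxF : x ∈ F) : x ∈ s := by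
  obtain ⟨C, hC, rfl⟩ := h.exists_eq_union
  exact hx.resolve_right fun hxC => hfresh.notMem_of_mem_left hxF (hC hxC)

theorem applicable (hfresh : Disjoint F (commit '' Gbar)) (hpre : a.prePos ⊆ F)
    (hr : CommitRefines commit Gbar a' a) (h : IsCommitExtension F Gbar commit s' s)
    (happ : a'.Applicable s') : a.Applicable s := by
  obtain ⟨C, -, rfl⟩ := h.exists_eq_union
  refine ⟨fun x hx => h.mem_of_mem_of_mem hfresh (happ.1 (hr.prePos_eq ▸ hx)) (hpre hx), ?_⟩
  exact Set.subset_eq_empty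
    (Set.inter_subset_inter hr.preNeg_subset Set.subset_union_left) happ.2

theorem apply (hinj : Set.InjOn commit Gbar) (hfresh : Disjoint F (commit '' Gbar))
    (hadd : a.add ⊆ F) (hdel : a.del ⊆ F) (hr : CommitRefines commit Gbar a' a)
    (h : IsCommitExtension F Gbar commit s' s) (happ : a'.Applicable s') :
    IsCommitExtension F Gbar commit (a'.apply s') (a.apply s) := by
  obtain ⟨i, hi, hadd'⟩ := hr.exists_add_eq
  refine ⟨Set.union_subset (Set.sdiff_subset.trans h.subset) hadd, ?_, ?_⟩
  · obtain ⟨C, hC, rfl⟩ := h.exists_eq_union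
    refine ⟨C ∪ commit '' i, Set.union_subset hC (Set.image_mono fun g hg => (hi hg).2), ?_⟩
    have hCdel : ∀ x ∈ C, x ∉ a.del := fun x hx hxd =>
      hfresh.notMem_of_mem_left (hdel hxd) (hC hx)
    ext x
    simp only [StripsAction.apply, hr.del_eq, hadd', Set.mem_union, Set.mem_sdiff]
    have := hCdel x
    tauto
  · intro g hg hgs'
    simp only [StripsAction.apply, hr.del_eq, hadd', Set.mem_union, Set.mem_sdiff] at hgs' ⊢
    rcases hgs' with ⟨hgs', hgdel⟩ | hgadd | ⟨g', hg', hcommit⟩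
    · -- `a'` could not be applied if it deleted `g` while `g-commit` holds.
      refine Or.inl ⟨h.mem_of_commit_mem g hg hgs', fun hgd => ?_⟩
      exact (Set.eq_empty_iff_forall_notMem.1 happ.2) (commit g)
        ⟨hr.commit_del_subset ⟨g, ⟨hgd, hg⟩, rfl⟩, hgs'⟩
    · exact (hfresh.notMem_of_mem_left (hadd hgadd) ⟨g, hg, rfl⟩).elim
    · exact Or.inr (hinj (hi hg').2 hg hcommit ▸ (hi hg').1)

end IsCommitExtension

section Soundness

variable {T : StripsTask α} {commit : α → α}

theorem FreshCommit.disjoint_image (hfresh : FreshCommit T commit) :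
    Disjoint T.F (commit '' pending T) :=
  Set.disjoint_right.2 fun _ ⟨g, hg, hx⟩ => hx ▸ hfresh.2 g hg

theorem seqApplicable_and_isCommitExtension (hwf : T.WellFormed)
    (hfresh : FreshCommit T commit) {π' π : List (StripsAction α)}
    (h : List.Forall₂ (CompiledFrom T commit) π' π) {s' s : Set α}
    (hs : IsCommitExtension T.F (pending T) commit s' s) (happ : SeqApplicable s' π') :
    SeqApplicable s π ∧
      IsCommitExtension T.F (pending T) commit (seqResult s' π') (seqResult s π) := by
  induction h generalizing s' s with
  | nil => exact ⟨trivial, hs⟩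
  | @cons a' a π' π ha _ ih =>
    obtain ⟨hpre, -, hadd, hdel, -⟩ := hwf.2.2.2.2 a ha.1
    have hdisj := hfresh.disjoint_image
    have hr := ha.commitRefines
    obtain ⟨ih_app, ih_ext⟩ :=
      ih (hs.apply hfresh.1 hdisj hadd hdel hr happ.1) happ.2
    exact ⟨⟨hs.applicable hdisj hpre hr happ.1, ih_app⟩, ih_ext⟩

theorem goal_subset_of_commitGoal_subset (hG : T.G ⊆ T.F) (hfresh : FreshCommit T commit)
    {s' s : Set α} (hs : IsCommitExtension T.F (pending T) commit s' s)
    (hgoal : (commitTask T commit).G ⊆ s') : T.G ⊆ s := by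
  intro g hg
  by_cases hp : g ∈ pending T
  · exact hs.mem_of_commit_mem g hp (hgoal (Or.inr ⟨g, hp, rfl⟩))
  · exact hs.mem_of_mem_of_mem hfresh.disjoint_image (hgoal (Or.inl ⟨hg, hp⟩)) (hG hg)

theorem mem_actions_of_forall₂ {π' π : List (StripsAction α)}
    (h : List.Forall₂ (CompiledFrom T commit) π' π) : ∀ a ∈ π, a ∈ T.A := by
  induction h with
  | nil => simp
  | cons ha _ ih => exact List.forall_mem_cons.2 ⟨ha.1, ih⟩

theorem planCost_eq_of_forall₂ {π' π : List (StripsAction α)}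
    (h : List.Forall₂ (CompiledFrom T commit) π' π) : planCost π = planCost π' := by
  induction h with
  | nil => rfl
  | cons ha _ ih =>
    simp only [planCost, List.map_cons, List.sum_cons] at ih ⊢
    rw [ih, ha.commitRefines.cost_eq]

end Soundness

/-- Theorem 2 (soundness): if `π'` is a plan of `P_c`, then the sequence `ρ(π')`,
obtained by replacing each action by its original counterpart, is a plan of `P`
of the same cost. -/
theorem commit_compilation_sound {α : Type*} (T : StripsTask α) (commit : α → α)
    (hwf : T.WellFormed) (hfresh : FreshCommit T commit)
    (π' : List (StripsAction α)) (hplan : (commitTask T commit).IsPlan π') :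
    ∀ π : List (StripsAction α), List.Forall₂ (CompiledFrom T commit) π' π →
      T.IsPlan π ∧ planCost π = planCost π' := by
  intro π h
  obtain ⟨-, happ', hgoal'⟩ := hplan
  have hinit : IsCommitExtension T.F (pending T) commit T.I T.I :=
    .self hfresh.disjoint_image hwf.2.2.1
  obtain ⟨happ, hfinal⟩ := seqApplicable_and_isCommitExtension hwf hfresh h hinit happ'
  have hgoal := goal_subset_of_commitGoal_subset hwf.2.2.2.1 hfresh hfinal hgoal'
  exact ⟨⟨mem_actions_of_forall₂ h, happ, hgoal⟩, planCost_eq_of_forall₂ h⟩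
end

section
/- Equality of optimal plan costs: if the STRIPS planning task P is solvable, then the minimum cost over all plans of P equals the minimum cost over all plans of the commit task P_c. -/
variable {α : Type*}

/-! A plan of `P` becomes a plan of `P_c` by committing each pending goal at its last achiever:
a committed goal is never added again, so it can only be deleted if it fails at the end, which
it cannot. Conversely, forgetting the commit fluents of a plan of `P_c` gives a plan of `P`; the
negative preconditions `g-commit` of goal-deleting actions ensure that every committed goal holds,
and every pending goal must be committed. Both translations preserve costs action by action, so
the two tasks have the same set of plan costs. -/

open Set

def addedBy (π : List (StripsAction α)) : Set α := {g | ∃ b ∈ π, g ∈ b.add}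

@[simp]
lemma addedBy_nil : addedBy ([] : List (StripsAction α)) = ∅ := by
  simp [addedBy]

@[simp]
lemma addedBy_cons (a : StripsAction α) (π : List (StripsAction α)) :
    addedBy (a :: π) = a.add ∪ addedBy π := by
  ext; simp [addedBy]

lemma seqResult_subset_union_addedBy :
    ∀ (s : Set α) (π : List (StripsAction α)), seqResult s π ⊆ s ∪ addedBy π
  | s, [] => by simp [seqResult]
  | s, a :: π => by
    refine (seqResult_subset_union_addedBy (a.apply s) π).trans ?_
    intro x
    simp only [StripsAction.apply, addedBy_cons, mem_union, mem_sdiff]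
    tauto

lemma StripsTask.WellFormed.seqResult_subset {T : StripsTask α} (hwf : T.WellFormed)
    {s : Set α} {π : List (StripsAction α)} (hs : s ⊆ T.F) (hπ : ∀ a ∈ π, a ∈ T.A) :
    seqResult s π ⊆ T.F := by
  refine (seqResult_subset_union_addedBy s π).trans (union_subset hs ?_)
  rintro g ⟨b, hb, hg⟩
  obtain ⟨-, -, hadd, -⟩ := hwf.2.2.2.2 b (hπ b hb)
  exact hadd hg

section SimAction

variable {c : α → α} {Q F s D i : Set α} {a : StripsAction α}

lemma simAction_apply_union_image (h : Disjoint (c '' D) a.del) :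
    (simAction c Q a i).apply (s ∪ c '' D) = a.apply s ∪ c '' (D ∪ i) := by
  ext x
  have hx : x ∈ c '' D → x ∉ a.del := fun hx => disjoint_left.1 h hx
  simp only [StripsAction.apply, simAction, image_union, mem_union, mem_sdiff]
  tauto

lemma simAction_applicable_union_image_iff (hinj : InjOn c Q) (hQF : Disjoint (c '' Q) F)
    (hpos : a.prePos ⊆ F) (hneg : a.preNeg ⊆ F) (hs : s ⊆ F) (hD : D ⊆ Q) (hi : i ⊆ Q) :
    (simAction c Q a i).Applicable (s ∪ c '' D) ↔
      a.Applicable s ∧ Disjoint i D ∧ Disjoint (a.del ∩ Q) D := by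
  have hDF : Disjoint (c '' D) F := hQF.mono_left (image_mono hD)
  have hinj_disjoint {X : Set α} (hX : X ⊆ Q) : Disjoint (c '' X) (c '' D) ↔ Disjoint X D :=
    ⟨Disjoint.of_image, fun h => by
      rw [disjoint_iff_inter_eq_empty, ← hinj.image_inter hX hD, h.inter_eq, image_empty]⟩
  have hpos_iff : a.prePos ⊆ s ∪ c '' D ↔ a.prePos ⊆ s :=
    ⟨fun h => Disjoint.subset_left_of_subset_union h (hDF.symm.mono_left hpos),
      fun h => h.trans subset_union_left⟩
  have hneg_D : Disjoint a.preNeg (c '' D) := hDF.symm.mono_left hneg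
  have hi_s : Disjoint (c '' i) s := (hQF.mono_left (image_mono hi)).mono_right hs
  have hdel_s : Disjoint (c '' (a.del ∩ Q)) s :=
    (hQF.mono_left (image_mono inter_subset_right)).mono_right hs
  simp only [StripsAction.Applicable, simAction, ← disjoint_iff_inter_eq_empty,
    disjoint_union_left, disjoint_union_right, hinj_disjoint hi,
    hinj_disjoint inter_subset_right, hpos_iff, hneg_D, hi_s, hdel_s, and_true, true_and,
    and_assoc]

lemma simAction_eq_commitAction (h : a.del ∩ Q = ∅) :
    simAction c Q a i = commitAction c a i := by
  simp [simAction, commitAction, h]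

lemma simAction_empty : simAction c Q a ∅ = forceCommitAction c Q a := by
  simp [simAction, forceCommitAction]

lemma commitAction_empty : commitAction c a ∅ = a := by
  simp [commitAction]

end SimAction

lemma FreshCommit.disjoint_image_s5 {T : StripsTask α} {c : α → α} (hfresh : FreshCommit T c)
    {D X : Set α} (hD : D ⊆ pending T) (hX : X ⊆ T.F) : Disjoint (c '' D) X := by
  rw [disjoint_left]
  rintro _ ⟨g, hg, rfl⟩ hgX
  exact hfresh.2 g (hD hg) (hX hgX)

def commitPlan (c : α → α) (Q : Set α) : List (StripsAction α) → List (StripsAction α)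
  | [] => []
  | a :: π => simAction c Q a ((a.add ∩ Q) \ addedBy π) :: commitPlan c Q π

lemma planCost_commitPlan (c : α → α) (Q : Set α) :
    ∀ π : List (StripsAction α), planCost (commitPlan c Q π) = planCost π
  | [] => rfl
  | a :: π => by
    simp only [commitPlan, planCost, List.map_cons, List.sum_cons]
    exact congrArg (a.cost + ·) (planCost_commitPlan c Q π)

section CommitTask

variable {T : StripsTask α} {c : α → α}

/-- `simAction` subsumes the other three constructions, so `A_c` has this uniform description. -/
lemma mem_commitTask_A_iff {a' : StripsAction α} :
    a' ∈ (commitTask T c).A ↔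
      ∃ a ∈ T.A, ∃ i ⊆ a.add ∩ pending T, a' = simAction c (pending T) a i := by
  constructor
  · rintro ⟨a, ha, ⟨-, hdel, i, hi, rfl⟩ | ⟨-, -, rfl⟩ | ⟨-, -, i, hi, rfl⟩ | ⟨-, hdel, h⟩⟩
    · exact ⟨a, ha, i, hi, (simAction_eq_commitAction hdel).symm⟩
    · exact ⟨a, ha, ∅, empty_subset _, simAction_empty.symm⟩
    · exact ⟨a, ha, i, hi, rfl⟩
    · refine ⟨a, ha, ∅, empty_subset _, ?_⟩
      rw [h, simAction_eq_commitAction hdel, commitAction_empty]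
  · rintro ⟨a, ha, i, hi, rfl⟩
    refine ⟨a, ha, ?_⟩
    by_cases hadd : a.add ∩ pending T = ∅ <;> by_cases hdel : a.del ∩ pending T = ∅
    · have hi : i = ∅ := subset_empty_iff.1 (hadd ▸ hi)
      exact Or.inr <| Or.inr <| Or.inr
        ⟨hadd, hdel, by rw [hi, simAction_eq_commitAction hdel, commitAction_empty]⟩
    · have hi : i = ∅ := subset_empty_iff.1 (hadd ▸ hi)
      exact Or.inr <| Or.inl ⟨hadd, hdel, by rw [hi, simAction_empty]⟩
    · exact Or.inl ⟨hadd, hdel, i, hi, simAction_eq_commitAction hdel⟩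
    · exact Or.inr <| Or.inr <| Or.inl ⟨hadd, hdel, i, hi, rfl⟩

lemma commitPlan_mem_commitTask_A :
    ∀ {π : List (StripsAction α)}, (∀ a ∈ π, a ∈ T.A) →
      ∀ a' ∈ commitPlan c (pending T) π, a' ∈ (commitTask T c).A
  | [], _ => by simp [commitPlan]
  | a :: π, hπ => by
    rw [List.forall_mem_cons] at hπ
    rw [commitPlan, List.forall_mem_cons]
    exact ⟨mem_commitTask_A_iff.2 ⟨a, hπ.1, _, sdiff_subset, rfl⟩,
      commitPlan_mem_commitTask_A hπ.2⟩

lemma commitPlan_seqApplicable_and_seqResult (hwf : T.WellFormed) (hfresh : FreshCommit T c) :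
    ∀ (π : List (StripsAction α)) (s D : Set α), (∀ a ∈ π, a ∈ T.A) → SeqApplicable s π →
      s ⊆ T.F → D ⊆ pending T → Disjoint D (addedBy π) → pending T ⊆ seqResult s π →
      SeqApplicable (s ∪ c '' D) (commitPlan c (pending T) π) ∧
        seqResult (s ∪ c '' D) (commitPlan c (pending T) π) =
          seqResult s π ∪ c '' (D ∪ pending T ∩ addedBy π)
  | [], s, D, _, _, _, _, _, _ => by simp [commitPlan, seqResult, SeqApplicable]
  | a :: π, s, D, hA, ⟨ha_app, hπ_app⟩, hs, hD, hD_added, hP => by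
    set i := (a.add ∩ pending T) \ addedBy π
    rw [List.forall_mem_cons] at hA
    obtain ⟨hpos, hneg, hadd, hdel, -⟩ := hwf.2.2.2.2 a hA.1
    rw [addedBy_cons, disjoint_union_right] at hD_added
    have hdel_D : Disjoint (a.del ∩ pending T) D := by
      rw [disjoint_left]
      rintro g ⟨hg_del, -⟩ hgD
      rcases seqResult_subset_union_addedBy _ π (hP (hD hgD)) with (⟨-, hg⟩ | hg) | hg
      · exact hg hg_del
      · exact disjoint_left.1 hD_added.1 hgD hg
      · exact disjoint_left.1 hD_added.2 hgD hg
    have happ : (simAction c (pending T) a i).Applicable (s ∪ c '' D) :=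
      (simAction_applicable_union_image_iff hfresh.1 (hfresh.disjoint_image_s5 subset_rfl subset_rfl)
        hpos hneg hs hD (sdiff_subset.trans inter_subset_right)).2
        ⟨ha_app, hD_added.1.symm.mono_left (sdiff_subset.trans inter_subset_left), hdel_D⟩
    have happly := simAction_apply_union_image (Q := pending T) (s := s) (i := i)
      (hfresh.disjoint_image_s5 hD hdel)
    obtain ⟨ih_app, ih_res⟩ := commitPlan_seqApplicable_and_seqResult hwf hfresh π (a.apply s)
      (D ∪ i) hA.2 hπ_app (union_subset (sdiff_subset.trans hs) hadd)
      (union_subset hD (sdiff_subset.trans inter_subset_right))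
      (disjoint_union_left.2 ⟨hD_added.2, disjoint_sdiff_left⟩) hP
    refine ⟨⟨happ, happly ▸ ih_app⟩, ?_⟩
    change seqResult ((simAction c (pending T) a i).apply (s ∪ c '' D)) _ = _
    have hcommitted : D ∪ i ∪ pending T ∩ addedBy π = D ∪ pending T ∩ (a.add ∪ addedBy π) := by
      ext g
      simp only [i, mem_union, mem_inter_iff, mem_sdiff]
      tauto
    rw [happly, ih_res, addedBy_cons, hcommitted]
    rfl

lemma exists_decompiled_of_seqApplicable (hwf : T.WellFormed) (hfresh : FreshCommit T c) :
    ∀ (π' : List (StripsAction α)) (s D : Set α), (∀ a' ∈ π', a' ∈ (commitTask T c).A) →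
      SeqApplicable (s ∪ c '' D) π' → s ⊆ T.F → D ⊆ pending T → D ⊆ s →
      ∃ (π : List (StripsAction α)) (D' : Set α), (∀ a ∈ π, a ∈ T.A) ∧ SeqApplicable s π ∧
        planCost π = planCost π' ∧ D' ⊆ pending T ∧ D' ⊆ seqResult s π ∧
        seqResult (s ∪ c '' D) π' = seqResult s π ∪ c '' D'
  | [], s, D, _, _, _, hD, hDs => ⟨[], D, by simp, trivial, rfl, hD, hDs, rfl⟩
  | a' :: π', s, D, hA', ⟨ha'_app, hπ'_app⟩, hs, hD, hDs => by
    rw [List.forall_mem_cons] at hA'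
    obtain ⟨a, ha, i, hi, rfl⟩ := mem_commitTask_A_iff.1 hA'.1
    obtain ⟨hpos, hneg, hadd, hdel, -⟩ := hwf.2.2.2.2 a ha
    obtain ⟨ha_app, -, hdel_D⟩ := (simAction_applicable_union_image_iff hfresh.1
      (hfresh.disjoint_image_s5 subset_rfl subset_rfl) hpos hneg hs hD
      (hi.trans inter_subset_right)).1 ha'_app
    have happly := simAction_apply_union_image (Q := pending T) (s := s) (i := i)
      (hfresh.disjoint_image_s5 hD hdel)
    have hcommitted : D ∪ i ⊆ a.apply s :=
      union_subset
        (fun g hg => Or.inl ⟨hDs hg, fun hg_del => disjoint_left.1 hdel_D ⟨hg_del, hD hg⟩ hg⟩)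
        (fun g hg => Or.inr (hi hg).1)
    obtain ⟨π, D', hA, hπ_app, hcost, hD'P, hD's, hres⟩ :=
      exists_decompiled_of_seqApplicable hwf hfresh π' (a.apply s) (D ∪ i) hA'.2
        (happly ▸ hπ'_app) (union_subset (sdiff_subset.trans hs) hadd)
        (union_subset hD (hi.trans inter_subset_right)) hcommitted
    refine ⟨a :: π, D', List.forall_mem_cons.2 ⟨ha, hA⟩, ⟨ha_app, hπ_app⟩, ?_, hD'P, hD's, ?_⟩
    · simp only [planCost, List.map_cons, List.sum_cons] at hcost ⊢
      exact congrArg (a.cost + ·) hcost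
    · change seqResult ((simAction c (pending T) a i).apply (s ∪ c '' D)) _ = _
      rw [happly, hres]
      rfl

lemma commitTask_G_subset_iff (hGF : T.G ⊆ T.F) (hfresh : FreshCommit T c) {X D : Set α}
    (hX : X ⊆ T.F) (hD : D ⊆ pending T) :
    (commitTask T c).G ⊆ X ∪ c '' D ↔ T.G \ pending T ⊆ X ∧ pending T ⊆ D := by
  have hG_iff : T.G \ pending T ⊆ X ∪ c '' D ↔ T.G \ pending T ⊆ X :=
    ⟨fun h => Disjoint.subset_left_of_subset_union h
      (hfresh.disjoint_image_s5 hD (sdiff_subset.trans hGF)).symm,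
      fun h => h.trans subset_union_left⟩
  have hcommit_iff : c '' pending T ⊆ X ∪ c '' D ↔ pending T ⊆ D := by
    rw [← hfresh.1.image_subset_image_iff subset_rfl hD]
    exact ⟨fun h => Disjoint.subset_right_of_subset_union h
      (hfresh.disjoint_image_s5 subset_rfl hX), fun h => h.trans subset_union_right⟩
  exact union_subset_iff.trans (and_congr hG_iff hcommit_iff)

lemma isPlan_commitPlan (hwf : T.WellFormed) (hfresh : FreshCommit T c)
    {π : List (StripsAction α)} (hπ : T.IsPlan π) :
    (commitTask T c).IsPlan (commitPlan c (pending T) π) := by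
  have ⟨_, _, hIF, hGF, _⟩ := hwf
  obtain ⟨hA, happ, hG⟩ := hπ
  have hP : pending T ⊆ seqResult T.I π := fun g hg => hG hg.1.1
  obtain ⟨happ', hres⟩ := commitPlan_seqApplicable_and_seqResult hwf hfresh π T.I ∅ hA happ
    hIF (empty_subset _) (empty_disjoint _) hP
  simp only [image_empty, union_empty, empty_union] at happ' hres
  refine ⟨commitPlan_mem_commitTask_A hA, happ', ?_⟩
  change (commitTask T c).G ⊆ seqResult T.I _
  rw [hres, commitTask_G_subset_iff hGF hfresh (hwf.seqResult_subset hIF hA)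
    inter_subset_left]
  exact ⟨sdiff_subset.trans hG, fun g hg =>
    ⟨hg, (seqResult_subset_union_addedBy T.I π (hP hg)).resolve_left hg.1.2⟩⟩

lemma exists_isPlan_of_commitTask_isPlan (hwf : T.WellFormed) (hfresh : FreshCommit T c)
    {π' : List (StripsAction α)} (hπ' : (commitTask T c).IsPlan π') :
    ∃ π, T.IsPlan π ∧ planCost π = planCost π' := by
  have ⟨_, _, hIF, hGF, _⟩ := hwf
  obtain ⟨hA', happ', hG'⟩ := hπ'
  obtain ⟨π, D', hA, happ, hcost, hD'P, hD's, hres⟩ := exists_decompiled_of_seqApplicable hwf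
    hfresh π' T.I ∅ hA' (by rw [image_empty, union_empty]; exact happ') hIF (empty_subset _)
    (empty_subset _)
  rw [image_empty, union_empty] at hres
  change (commitTask T c).G ⊆ seqResult T.I π' at hG'
  rw [hres, commitTask_G_subset_iff hGF hfresh (hwf.seqResult_subset hIF hA) hD'P] at hG'
  refine ⟨π, ⟨hA, happ, fun g hg => ?_⟩, hcost⟩
  by_cases hgP : g ∈ pending T
  · exact hD's (hG'.2 hgP)
  · exact hG'.1 ⟨hg, hgP⟩

end CommitTask

theorem commit_compilation_optimal_cost_eq_general {α : Type*} (T : StripsTask α) (commit : α → α)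
    (hwf : T.WellFormed) (hfresh : FreshCommit T commit) :
    sInf (planCost '' {π : List (StripsAction α) | T.IsPlan π}) =
      sInf (planCost '' {π' : List (StripsAction α) | (commitTask T commit).IsPlan π'}) := by
  congr 1
  apply Subset.antisymm
  · rintro _ ⟨π, hπ, rfl⟩
    exact ⟨_, isPlan_commitPlan hwf hfresh hπ, planCost_commitPlan _ _ π⟩
  · rintro _ ⟨π', hπ', rfl⟩
    exact exists_isPlan_of_commitTask_isPlan hwf hfresh hπ'

/-- Equality of optimal plan costs: if `P` is solvable, the minimum cost over all
plans of `P` equals the minimum cost over all plans of `P_c`. -/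
theorem commit_compilation_optimal_cost_eq {α : Type*} (T : StripsTask α) (commit : α → α)
    (hwf : T.WellFormed) (hfresh : FreshCommit T commit)
    (h : T.Solvable) :
    sInf (planCost '' {π : List (StripsAction α) | T.IsPlan π}) =
      sInf (planCost '' {π' : List (StripsAction α) | (commitTask T commit).IsPlan π'}) :=
  commit_compilation_optimal_cost_eq_general T commit hwf hfresh
end

section
/- Solvability equivalence: the STRIPS planning task P is solvable if and only if the commit task P_c is solvable. -/
variable {α : Type*}

/-!
Forward, a plan of `P` is replayed action by action, each `a` by `simAction a i` where `i` is the
set of pending goals that `a` adds and that no later action adds or deletes again. Goals committed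
this way are never touched afterwards, so no negative precondition `g-commit` of a later action is
violated, and at the end every pending goal of the final state is committed.
Backward, every action of `P_c` acts on the fluents of `F` like the action of `P` it is compiled
from, and a committed goal can no longer be deleted, so along a plan of `P_c` every committed goal
holds; projecting the plan to `F` gives a plan of `P`.
-/

namespace StripsTask

theorem WellFormed.apply_subset {T : StripsTask α} (hwf : T.WellFormed) {a : StripsAction α}
    (ha : a ∈ T.A) {s : Set α} (hs : s ⊆ T.F) : a.apply s ⊆ T.F :=
  Set.union_subset (Set.sdiff_subset.trans hs) (hwf.2.2.2.2 a ha).2.2.1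

end StripsTask

namespace FreshCommit

variable {T : StripsTask α} {commit : α → α}

theorem disjoint_image_s6 (hfresh : FreshCommit T commit) {X : Set α} (hX : X ⊆ T.F) :
    Disjoint X (commit '' pending T) :=
  Set.disjoint_right.mpr fun _ ⟨g, hg, hgx⟩ hx => hfresh.2 g hg (hgx ▸ hX hx)

theorem disjoint_image_image_s6 (hfresh : FreshCommit T commit) {X Y : Set α}
    (hX : X ⊆ pending T) (hY : Y ⊆ pending T) (hXY : Disjoint X Y) :
    Disjoint (commit '' X) (commit '' Y) := by
  rw [Set.disjoint_iff_inter_eq_empty, ← hfresh.1.image_inter hX hY,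
    Set.disjoint_iff_inter_eq_empty.mp hXY, Set.image_empty]

end FreshCommit

section CommitTask

variable {T : StripsTask α} {commit : α → α}

theorem simAction_mem_commitTask {a : StripsAction α} {i : Set α} (ha : a ∈ T.A)
    (hi : i ⊆ a.add ∩ pending T) :
    simAction commit (pending T) a i ∈ (commitTask T commit).A := by
  refine ⟨a, ha, ?_⟩
  by_cases hadd : a.add ∩ pending T = ∅ <;> by_cases hdel : a.del ∩ pending T = ∅
  · obtain rfl : i = ∅ := Set.subset_empty_iff.mp (hadd ▸ hi)
    simp [simAction, hadd, hdel]
  · obtain rfl : i = ∅ := Set.subset_empty_iff.mp (hadd ▸ hi)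
    simp [simAction, forceCommitAction, hadd, hdel]
  · exact Or.inl ⟨hadd, hdel, i, hi, by simp [simAction, commitAction, hdel]⟩
  · exact Or.inr (Or.inr (Or.inl ⟨hadd, hdel, i, hi, rfl⟩))

theorem simAction_applicable (hwf : T.WellFormed) (hfresh : FreshCommit T commit)
    {a : StripsAction α} (ha : a ∈ T.A) {s D i : Set α} (hs : s ⊆ T.F) (hap : a.Applicable s)
    (hD : D ⊆ pending T) (hDadd : Disjoint D a.add) (hDdel : Disjoint D a.del)
    (hi : i ⊆ a.add ∩ pending T) :
    (simAction commit (pending T) a i).Applicable (s ∪ commit '' D) := by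
  obtain ⟨-, hnegF, -, -, -⟩ := hwf.2.2.2.2 a ha
  have hsD : Disjoint (commit '' pending T) s := (hfresh.disjoint_image_s6 hs).symm
  refine ⟨hap.1.trans Set.subset_union_left, Set.disjoint_iff_inter_eq_empty.mp ?_⟩
  simp only [simAction, Set.disjoint_union_left, Set.disjoint_union_right]
  have hiP : i ⊆ pending T := hi.trans Set.inter_subset_right
  have hdelP : a.del ∩ pending T ⊆ pending T := Set.inter_subset_right
  refine ⟨⟨⟨?_, ?_⟩, ?_⟩, ⟨?_, ?_⟩, ?_⟩
  · exact Set.disjoint_iff_inter_eq_empty.mpr hap.2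
  · exact hsD.mono_left (Set.image_mono hiP)
  · exact hsD.mono_left (Set.image_mono hdelP)
  · exact (hfresh.disjoint_image_s6 hnegF).mono_right (Set.image_mono hD)
  · exact hfresh.disjoint_image_image_s6 hiP hD
      (hDadd.symm.mono_left (hi.trans Set.inter_subset_left))
  · exact hfresh.disjoint_image_image_s6 hdelP hD (hDdel.symm.mono_left Set.inter_subset_left)

theorem simAction_apply (hwf : T.WellFormed) (hfresh : FreshCommit T commit)
    {a : StripsAction α} (ha : a ∈ T.A) {s D : Set α} (hD : D ⊆ pending T) (i : Set α) :
    (simAction commit (pending T) a i).apply (s ∪ commit '' D) =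
      a.apply s ∪ commit '' (D ∪ i) := by
  obtain ⟨-, -, -, hdelF, -⟩ := hwf.2.2.2.2 a ha
  have hDdel : Disjoint (commit '' D) a.del :=
    ((hfresh.disjoint_image_s6 hdelF).mono_right (Set.image_mono hD)).symm
  ext x
  have hx : x ∈ commit '' D → x ∉ a.del := fun h => Set.disjoint_left.mp hDdel h
  simp only [StripsAction.apply, simAction, Set.image_union, Set.mem_union, Set.mem_sdiff]
  tauto

def stableGoals (T : StripsTask α) (s : Set α) (π : List (StripsAction α)) : Set α :=
  {g ∈ pending T | g ∈ s ∧ ∀ a ∈ π, g ∉ a.add ∧ g ∉ a.del}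

theorem stableGoals_subset_pending (s : Set α) (π : List (StripsAction α)) :
    stableGoals T s π ⊆ pending T :=
  fun _ hg => hg.1

theorem stableGoals_nil (s : Set α) : stableGoals T s [] = pending T ∩ s := by
  ext g
  simp [stableGoals]

theorem stableGoals_apply (a : StripsAction α) (s : Set α) (π : List (StripsAction α)) :
    stableGoals T (a.apply s) π =
      stableGoals T s (a :: π) ∪ (stableGoals T (a.apply s) π ∩ a.add) := by
  ext g
  simp only [stableGoals, StripsAction.apply, List.forall_mem_cons, Set.mem_ofPred_eq,
    Set.mem_union, Set.mem_inter_iff, Set.mem_sdiff]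
  tauto

theorem disjoint_stableGoals_cons_add {a : StripsAction α} {s : Set α}
    {π : List (StripsAction α)} :
    Disjoint (stableGoals T s (a :: π)) a.add :=
  Set.disjoint_left.mpr fun _ hg => (hg.2.2 a List.mem_cons_self).1

theorem disjoint_stableGoals_cons_del {a : StripsAction α} {s : Set α}
    {π : List (StripsAction α)} :
    Disjoint (stableGoals T s (a :: π)) a.del :=
  Set.disjoint_left.mpr fun _ hg => (hg.2.2 a List.mem_cons_self).2

theorem exists_commit_plan (hwf : T.WellFormed) (hfresh : FreshCommit T commit) :
    ∀ (π : List (StripsAction α)) (s : Set α), s ⊆ T.F → (∀ a ∈ π, a ∈ T.A) →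
      SeqApplicable s π →
      ∃ π', (∀ a' ∈ π', a' ∈ (commitTask T commit).A) ∧
        SeqApplicable (s ∪ commit '' stableGoals T s π) π' ∧
        seqResult (s ∪ commit '' stableGoals T s π) π' =
          seqResult s π ∪ commit '' (pending T ∩ seqResult s π)
  | [], s, _, _, _ => ⟨[], by simp, trivial, by rw [stableGoals_nil]; rfl⟩
  | a :: π, s, hs, hA, ⟨hap, happ⟩ => by
    rw [List.forall_mem_cons] at hA
    obtain ⟨π', hA', happ', hres'⟩ :=
      exists_commit_plan hwf hfresh π (a.apply s) (hwf.apply_subset hA.1 hs) hA.2 happ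
    set i := stableGoals T (a.apply s) π ∩ a.add
    have hi : i ⊆ a.add ∩ pending T := fun g hg => ⟨hg.2, hg.1.1⟩
    have hD := stableGoals_subset_pending (T := T) s (a :: π)
    have hstep :
        (simAction commit (pending T) a i).apply (s ∪ commit '' stableGoals T s (a :: π)) =
          a.apply s ∪ commit '' stableGoals T (a.apply s) π := by
      rw [simAction_apply hwf hfresh hA.1 hD, ← stableGoals_apply]
    refine ⟨simAction commit (pending T) a i :: π',
      List.forall_mem_cons.mpr ⟨simAction_mem_commitTask hA.1 hi, hA'⟩,
      ⟨simAction_applicable hwf hfresh hA.1 hs hap hD disjoint_stableGoals_cons_add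
        disjoint_stableGoals_cons_del hi, hstep ▸ happ'⟩, ?_⟩
    simp only [seqResult, hstep, hres']

theorem CompiledFrom.shape {a' a : StripsAction α} (h : CompiledFrom T commit a' a) :
    ∃ i ⊆ a.add ∩ pending T,
      a'.prePos = a.prePos ∧ a.preNeg ⊆ a'.preNeg ∧
      commit '' (a.del ∩ pending T) ⊆ a'.preNeg ∧
      a'.add = a.add ∪ commit '' i ∧ a'.del = a.del := by
  obtain ⟨-, h⟩ := h
  rcases h with ⟨-, hdel, i, hi, rfl⟩ | ⟨-, -, rfl⟩ | ⟨-, -, j, hj, rfl⟩ |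
    ⟨-, hdel, rfl⟩
  · exact ⟨i, hi, rfl, Set.subset_union_left, by simp [hdel], rfl, rfl⟩
  · exact ⟨∅, Set.empty_subset _, rfl, Set.subset_union_left, Set.subset_union_right,
      by simp [forceCommitAction], rfl⟩
  · exact ⟨j, hj, rfl, Set.subset_union_left.trans Set.subset_union_left, Set.subset_union_right,
      rfl, rfl⟩
  · exact ⟨∅, Set.empty_subset _, rfl, subset_rfl, by simp [hdel], by simp, rfl⟩

def CommitsHold (T : StripsTask α) (commit : α → α) (t : Set α) : Prop :=
  ∀ g ∈ pending T, commit g ∈ t → g ∈ t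

theorem commitsHold_of_subset (hfresh : FreshCommit T commit) {t : Set α} (ht : t ⊆ T.F) :
    CommitsHold T commit t :=
  fun g hg hc => (hfresh.2 g hg (ht hc)).elim

namespace CompiledFrom

variable {a' a : StripsAction α} {t : Set α}

theorem applicable_inter (hwf : T.WellFormed) (h : CompiledFrom T commit a' a)
    (hap : a'.Applicable t) : a.Applicable (t ∩ T.F) := by
  obtain ⟨-, -, hpre, hneg, -, -, -⟩ := h.shape
  obtain ⟨hpreF, -⟩ := hwf.2.2.2.2 a h.1
  refine ⟨Set.subset_inter (hpre ▸ hap.1) hpreF, Set.subset_empty_iff.mp ?_⟩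
  rw [← hap.2]
  exact Set.inter_subset_inter hneg Set.inter_subset_left

theorem apply_inter (hwf : T.WellFormed) (hfresh : FreshCommit T commit)
    (h : CompiledFrom T commit a' a) : a'.apply t ∩ T.F = a.apply (t ∩ T.F) := by
  obtain ⟨i, hi, -, -, -, hadd, hdel⟩ := h.shape
  obtain ⟨-, -, haddF, -, -⟩ := hwf.2.2.2.2 a h.1
  have hiF : Disjoint (commit '' i) T.F :=
    (hfresh.disjoint_image_s6 subset_rfl).symm.mono_left
      (Set.image_mono (hi.trans Set.inter_subset_right))
  ext x
  have hxi : x ∈ commit '' i → x ∉ T.F := fun h => Set.disjoint_left.mp hiF h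
  have hxa : x ∈ a.add → x ∈ T.F := fun h => haddF h
  simp only [StripsAction.apply, hadd, hdel, Set.mem_union, Set.mem_inter_iff, Set.mem_sdiff]
  tauto

theorem commitsHold_apply (hwf : T.WellFormed) (hfresh : FreshCommit T commit)
    (h : CompiledFrom T commit a' a) (hap : a'.Applicable t) (ht : CommitsHold T commit t) :
    CommitsHold T commit (a'.apply t) := by
  obtain ⟨i, hi, -, -, hdelneg, hadd, hdel⟩ := h.shape
  obtain ⟨-, -, haddF, -, -⟩ := hwf.2.2.2.2 a h.1
  intro g hg hc
  simp only [StripsAction.apply, hadd, hdel, Set.mem_union, Set.mem_sdiff] at hc ⊢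
  rcases hc with ⟨hct, -⟩ | hca | hci
  · refine Or.inl ⟨ht g hg hct, fun hgdel => ?_⟩
    exact Set.eq_empty_iff_forall_notMem.mp hap.2 (commit g)
      ⟨hdelneg ⟨g, ⟨hgdel, hg⟩, rfl⟩, hct⟩
  · exact (hfresh.2 g hg (haddF hca)).elim
  · have hiP : i ⊆ pending T := hi.trans Set.inter_subset_right
    exact Or.inr (Or.inl (hi ((hfresh.1.mem_image_iff hiP hg).mp hci)).1)

end CompiledFrom

theorem exists_projected_plan (hwf : T.WellFormed) (hfresh : FreshCommit T commit) :
    ∀ (π' : List (StripsAction α)) (t : Set α),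
      (∀ a' ∈ π', a' ∈ (commitTask T commit).A) → SeqApplicable t π' →
      CommitsHold T commit t →
      ∃ π, (∀ a ∈ π, a ∈ T.A) ∧ SeqApplicable (t ∩ T.F) π ∧
        seqResult (t ∩ T.F) π = seqResult t π' ∩ T.F ∧
        CommitsHold T commit (seqResult t π')
  | [], _, _, _, ht => ⟨[], by simp, trivial, rfl, ht⟩
  | a' :: π', t, hA', ⟨hap', happ'⟩, ht => by
    rw [List.forall_mem_cons] at hA'
    obtain ⟨a, h⟩ := hA'.1
    obtain ⟨π, hA, happ, hres, hcommits⟩ := exists_projected_plan hwf hfresh π' (a'.apply t)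
      hA'.2 happ' (h.commitsHold_apply hwf hfresh hap' ht)
    rw [h.apply_inter hwf hfresh] at happ hres
    exact ⟨a :: π, List.forall_mem_cons.mpr ⟨h.1, hA⟩,
      ⟨h.applicable_inter hwf hap', happ⟩, hres, hcommits⟩

end CommitTask

/-- Solvability equivalence: `P` is solvable iff `P_c` is solvable. -/
theorem commit_compilation_solvable_iff {α : Type*} (T : StripsTask α) (commit : α → α)
    (hwf : T.WellFormed) (hfresh : FreshCommit T commit) :
    T.Solvable ↔ (commitTask T commit).Solvable := by
  constructor
  · rintro ⟨π, hA, happ, hG⟩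
    have hnone : stableGoals T T.I π = ∅ :=
      Set.eq_empty_of_forall_notMem fun g hg => hg.1.1.2 hg.2.1
    obtain ⟨π', hA', happ', hres⟩ := exists_commit_plan hwf hfresh π T.I hwf.2.2.1 hA happ
    rw [hnone, Set.image_empty, Set.union_empty] at happ' hres
    refine ⟨π', hA', happ', ?_⟩
    show (T.G \ pending T) ∪ commit '' pending T ⊆ seqResult T.I π'
    rw [hres]
    exact Set.union_subset_union (Set.sdiff_subset.trans hG)
      (Set.image_mono fun g hg => ⟨hg, hG hg.1.1⟩)
  · rintro ⟨π', hA', happ', hG'⟩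
    obtain ⟨π, hA, happ, hres, hcommits⟩ := exists_projected_plan hwf hfresh π' T.I hA' happ'
      (commitsHold_of_subset hfresh hwf.2.2.1)
    rw [Set.inter_eq_left.mpr hwf.2.2.1] at happ hres
    refine ⟨π, hA, happ, fun g hg => hres ▸ ⟨?_, hwf.2.2.2.1 hg⟩⟩
    by_cases hgP : g ∈ pending T
    · exact hcommits g hgP (hG' (Or.inr ⟨g, hgP, rfl⟩))
    · exact hG' (Or.inl ⟨hg, hgP⟩)
end

section
/- One-step persistence of committed goals: for every pending goal g ∈ Ḡ, every state s ⊆ F ∪ F' with g ∈ s and g-commit ∈ s, and every action a' ∈ A_c applicable in s, it holds that g ∈ γ(s, a') and g-commit ∈ γ(s, a'). -/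
variable {α : Type*}

theorem StripsAction.Applicable.notMem_of_mem_preNeg {a : StripsAction α} {s : Set α}
    (happ : a.Applicable s) {x : α} (hx : x ∈ a.preNeg) : x ∉ s :=
  fun hxs => (Set.eq_empty_iff_forall_notMem.mp happ.2) x ⟨hx, hxs⟩

theorem StripsAction.mem_apply_of_mem_of_notMem_del {a : StripsAction α} {s : Set α} {x : α}
    (hx : x ∈ s) (hdel : x ∉ a.del) : x ∈ a.apply s :=
  Or.inl ⟨hx, hdel⟩

theorem StripsTask.WellFormed.del_subset {T : StripsTask α} (hwf : T.WellFormed)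
    {a : StripsAction α} (ha : a ∈ T.A) : a.del ⊆ T.F :=
  (hwf.2.2.2.2 a ha).2.2.2.1

namespace CompiledFrom

variable {T : StripsTask α} {commit : α → α} {a' a : StripsAction α}

theorem del_eq (h : CompiledFrom T commit a' a) : a'.del = a.del := by
  rcases h.2 with ⟨-, -, i, -, rfl⟩ | ⟨-, -, rfl⟩ | ⟨-, -, j, -, rfl⟩ | ⟨-, -, rfl⟩ <;> rfl

/-- Either `a` deletes no pending goal, or `a'` carries the commit fluents of the pending
goals `a` deletes as negative preconditions. -/
theorem notMem_del_of_commit_mem (h : CompiledFrom T commit a' a) {s : Set α}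
    (happ : a'.Applicable s) {g : α} (hg : g ∈ pending T) (hcs : commit g ∈ s) :
    g ∉ a'.del := by
  rw [h.del_eq]
  intro hdel
  have hdeleted : g ∈ a.del ∩ pending T := ⟨hdel, hg⟩
  rcases h.2 with ⟨-, hnone, -, -, -⟩ | ⟨-, -, rfl⟩ | ⟨-, -, j, -, rfl⟩ | ⟨-, hnone, -⟩
  · exact Set.eq_empty_iff_forall_notMem.mp hnone g hdeleted
  · exact StripsAction.Applicable.notMem_of_mem_preNeg happ
      (Set.mem_union_right _ ⟨g, hdeleted, rfl⟩) hcs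
  · exact StripsAction.Applicable.notMem_of_mem_preNeg happ
      (Set.mem_union_right _ ⟨g, hdeleted, rfl⟩) hcs
  · exact Set.eq_empty_iff_forall_notMem.mp hnone g hdeleted

end CompiledFrom

theorem committed_goal_one_step_persistence_general {α : Type*} (T : StripsTask α) (commit : α → α)
    (hwf : T.WellFormed) (hfresh : FreshCommit T commit)
    (g : α) (hg : g ∈ pending T)
    (s : Set α)
    (hgs : g ∈ s) (hcs : commit g ∈ s)
    (a' : StripsAction α) (ha' : a' ∈ (commitTask T commit).A)
    (happ : a'.Applicable s) :
    g ∈ a'.apply s ∧ commit g ∈ a'.apply s := by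
  obtain ⟨a, ha⟩ := ha'
  have hcommit_del : commit g ∉ a'.del := by
    rw [ha.del_eq]
    exact fun hdel => hfresh.2 g hg (hwf.del_subset ha.1 hdel)
  exact ⟨StripsAction.mem_apply_of_mem_of_notMem_del hgs (ha.notMem_del_of_commit_mem happ hg hcs),
    StripsAction.mem_apply_of_mem_of_notMem_del hcs hcommit_del⟩

/-- One-step persistence of committed goals: if a pending goal `g` and its commit
fluent both hold in `s`, they both hold after applying any applicable `a' ∈ A_c`. -/
theorem committed_goal_one_step_persistence {α : Type*} (T : StripsTask α) (commit : α → α)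
    (hwf : T.WellFormed) (hfresh : FreshCommit T commit)
    (g : α) (hg : g ∈ pending T)
    (s : Set α) (hs : s ⊆ (commitTask T commit).F)
    (hgs : g ∈ s) (hcs : commit g ∈ s)
    (a' : StripsAction α) (ha' : a' ∈ (commitTask T commit).A)
    (happ : a'.Applicable s) :
    g ∈ a'.apply s ∧ commit g ∈ a'.apply s :=
  committed_goal_one_step_persistence_general T commit hwf hfresh g hg s hgs hcs a' ha' happ
end

section
/- Goal correspondence: for every action sequence π' over A_c that is applicable in the initial state I of the commit task P_c, if G_c ⊆ Γ(I, π') then G ⊆ Γ(I, π'); i.e., any state reached from I in P_c that satisfies the compiled goal G_c also satisfies the original goal G. -/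
variable {α : Type*}

/-! The compiled goal asks for `g-commit` instead of `g` for each pending goal `g`, so it suffices
that `g-commit → g` holds in every reachable state. This holds initially because commit fluents
are fresh, and each compiled action keeps it: it adds `g-commit` only together with `g`, and it
deletes a pending `g` only under the negative precondition `g-commit`. -/

lemma seqResult_of_forall_apply {P : Set α → Prop} {A : Set (StripsAction α)}
    (hstep : ∀ a ∈ A, ∀ s, a.Applicable s → P s → P (a.apply s)) :
    ∀ (π : List (StripsAction α)) (s : Set α),
      (∀ a ∈ π, a ∈ A) → SeqApplicable s π → P s → P (seqResult s π)
  | [], _, _, _, hs => hs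
  | a :: π, s, hmem, ⟨ha, hπ⟩, hs =>
    seqResult_of_forall_apply hstep π (a.apply s) (fun b hb => hmem b (List.mem_cons_of_mem a hb))
      hπ (hstep a (hmem a List.mem_cons_self) s ha hs)

def CommitInvariant (T : StripsTask α) (commit : α → α) (s : Set α) : Prop :=
  ∀ g ∈ pending T, commit g ∈ s → g ∈ s

section CommitInvariant

variable {T : StripsTask α} {commit : α → α}

lemma commitInvariant_of_subset (hfresh : FreshCommit T commit) {s : Set α} (hs : s ⊆ T.F) :
    CommitInvariant T commit s :=
  fun g hg hcg => absurd (hs hcg) (hfresh.2 g hg)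

lemma CommitInvariant.apply {s : Set α} (hs : CommitInvariant T commit s) {b : StripsAction α}
    (hb : b.Applicable s) (hadd : ∀ g ∈ pending T, commit g ∈ b.add → g ∈ b.add)
    (hdel : ∀ g ∈ pending T, g ∈ b.del → commit g ∈ b.preNeg) :
    CommitInvariant T commit (b.apply s) := by
  rintro g hg (⟨hcg, -⟩ | hcg)
  · refine Or.inl ⟨hs g hg hcg, fun hgd => ?_⟩
    exact Set.eq_empty_iff_forall_notMem.mp hb.2 (commit g) ⟨hdel g hg hgd, hcg⟩
  · exact Or.inr (hadd g hg hcg)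

lemma commit_notMem_add (hwf : T.WellFormed) (hfresh : FreshCommit T commit)
    {a : StripsAction α} (ha : a ∈ T.A) {g : α} (hg : g ∈ pending T) : commit g ∉ a.add :=
  fun h => hfresh.2 g hg ((hwf.2.2.2.2 a ha).2.2.1 h)

lemma mem_add_of_commit_mem_add_union_image (hwf : T.WellFormed) (hfresh : FreshCommit T commit)
    {a : StripsAction α} (ha : a ∈ T.A) {i : Set α} (hi : i ⊆ a.add ∩ pending T)
    {g : α} (hg : g ∈ pending T) (hcg : commit g ∈ a.add ∪ commit '' i) : g ∈ a.add :=
  hcg.elim (fun h => absurd h (commit_notMem_add hwf hfresh ha hg))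
    fun h => (hi ((hfresh.1.mem_image_iff (fun _ hx => (hi hx).2) hg).mp h)).1

lemma CompiledFrom.commitInvariant_apply (hwf : T.WellFormed) (hfresh : FreshCommit T commit)
    {a' a : StripsAction α} (hcomp : CompiledFrom T commit a' a) {s : Set α}
    (hs : CommitInvariant T commit s) (happ : a'.Applicable s) :
    CommitInvariant T commit (a'.apply s) := by
  obtain ⟨ha, hcase⟩ := hcomp
  have hnoDel {b : StripsAction α} (hdel : a.del ∩ pending T = ∅) :
      ∀ g ∈ pending T, g ∈ a.del → commit g ∈ b.preNeg := fun g hg hgd =>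
    (Set.eq_empty_iff_forall_notMem.mp hdel g ⟨hgd, hg⟩).elim
  have hcommitted {i : Set α} (hi : i ⊆ a.add ∩ pending T) :
      ∀ g ∈ pending T, commit g ∈ a.add ∪ commit '' i → g ∈ a.add ∪ commit '' i :=
    fun g hg h => Or.inl (mem_add_of_commit_mem_add_union_image hwf hfresh ha hi hg h)
  have hfresh_add : ∀ g ∈ pending T, commit g ∈ a.add → g ∈ a.add :=
    fun g hg h => absurd h (commit_notMem_add hwf hfresh ha hg)
  rcases hcase with
    ⟨-, hdel, i, hi, rfl⟩ | ⟨-, -, rfl⟩ | ⟨-, -, j, hj, rfl⟩ | ⟨-, hdel, rfl⟩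
  · exact hs.apply happ (hcommitted hi) (hnoDel hdel)
  · exact hs.apply happ hfresh_add fun g hg hgd => Or.inr ⟨g, ⟨hgd, hg⟩, rfl⟩
  · exact hs.apply happ (hcommitted hj) fun g hg hgd => Or.inr ⟨g, ⟨hgd, hg⟩, rfl⟩
  · exact hs.apply happ hfresh_add (hnoDel hdel)

lemma commitInvariant_seqResult (hwf : T.WellFormed) (hfresh : FreshCommit T commit)
    {π' : List (StripsAction α)} (hmem : ∀ a' ∈ π', a' ∈ (commitTask T commit).A)
    (happ : SeqApplicable T.I π') : CommitInvariant T commit (seqResult T.I π') :=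
  seqResult_of_forall_apply
    (fun _ ⟨_, hcomp⟩ _ hb hs => hcomp.commitInvariant_apply hwf hfresh hs hb) π' T.I hmem happ
    (commitInvariant_of_subset hfresh hwf.2.2.1)

end CommitInvariant

/-- Goal correspondence: any state reached from `I` by a sequence over `A_c` that
satisfies the compiled goal `G_c` also satisfies the original goal `G`. -/
theorem commit_compilation_goal_correspondence {α : Type*} (T : StripsTask α) (commit : α → α)
    (hwf : T.WellFormed) (hfresh : FreshCommit T commit)
    (π' : List (StripsAction α)) (hmem : ∀ a' ∈ π', a' ∈ (commitTask T commit).A)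
    (happ : SeqApplicable (commitTask T commit).I π')
    (hgoal : (commitTask T commit).G ⊆ seqResult (commitTask T commit).I π') :
    T.G ⊆ seqResult (commitTask T commit).I π' := by
  intro g hgG
  by_cases hg : g ∈ pending T
  · exact commitInvariant_seqResult hwf hfresh hmem happ g hg (hgoal (Or.inr ⟨g, hg, rfl⟩))
  · exact hgoal (Or.inl ⟨hgG, hg⟩)
end
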